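/- Let G be a finite simple graph with at least one edge. If G is irreducible, then G is connected and vertex critical, i.e., α_0(G \ {x}) < α_0(G) for every vertex x of G, where G \ {x} denotes the graph obtained by deleting x and all edges incident with x. -/
import Mathlib


/-- The vertex covering number `α₀` of the induced subgraph of `G` on the set of
vertices `S`: the least cardinality of a set `C ⊆ S` covering every edge of `G`
with both endpoints in `S`. -/
noncomputable def alpha0On {n : ℕ} (G : SimpleGraph (Fin n)) (S : Finset (Fin n)) : ℕ :=
  sInf {k : ℕ | ∃ C : Finset (Fin n), C ⊆ S ∧
    (∀ i ∈ S, ∀ j ∈ S, G.Adj i j → i ∈ C ∨ j ∈ C) ∧ C.card = k}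

/-- The induced subgraph of `G` on the vertex set `S` is irreducible if `S`
cannot be partitioned into two nonempty sets `S1`, `S2` with
`α₀(G[S]) = α₀(G[S1]) + α₀(G[S2])`. -/
def IrreducibleOn {n : ℕ} (G : SimpleGraph (Fin n)) (S : Finset (Fin n)) : Prop :=
  ¬ ∃ S1 S2 : Finset (Fin n), S1.Nonempty ∧ S2.Nonempty ∧
      Disjoint S1 S2 ∧ S1 ∪ S2 = S ∧
      alpha0On G S = alpha0On G S1 + alpha0On G S2

private lemma alpha0On_exists {n : ℕ} (G : SimpleGraph (Fin n)) (S : Finset (Fin n)) :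
    ∃ C : Finset (Fin n), C ⊆ S ∧
      (∀ i ∈ S, ∀ j ∈ S, G.Adj i j → i ∈ C ∨ j ∈ C) ∧ C.card = alpha0On G S := by
  have hne : {k : ℕ | ∃ C : Finset (Fin n), C ⊆ S ∧
      (∀ i ∈ S, ∀ j ∈ S, G.Adj i j → i ∈ C ∨ j ∈ C) ∧ C.card = k}.Nonempty :=
    ⟨S.card, S, le_refl _, fun i hi _ _ _ => Or.inl hi, rfl⟩
  exact Nat.sInf_mem hne

private lemma alpha0On_le {n : ℕ} (G : SimpleGraph (Fin n)) (S C : Finset (Fin n))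
    (hCS : C ⊆ S) (hcov : ∀ i ∈ S, ∀ j ∈ S, G.Adj i j → i ∈ C ∨ j ∈ C) :
    alpha0On G S ≤ C.card :=
  Nat.sInf_le ⟨C, hCS, hcov, rfl⟩

theorem irreducible_implies_connected_and_vertex_critical {n : ℕ}
    (G : SimpleGraph (Fin n)) (hE : ∃ i j : Fin n, G.Adj i j)
    (hirr : IrreducibleOn G Finset.univ) :
    G.Connected ∧
      ∀ x : Fin n,
        alpha0On G (Finset.univ.erase x) < alpha0On G Finset.univ := by
  classical
  obtain ⟨a, b, hab⟩ := hE
  have hne : a ≠ b := G.ne_of_adj hab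
  constructor
  · rw [SimpleGraph.connected_iff]
    refine ⟨?_, ⟨a⟩⟩
    by_contra hpc
    unfold SimpleGraph.Preconnected at hpc
    push_neg at hpc
    obtain ⟨u, v, huv⟩ := hpc
    set S1 : Finset (Fin n) := Finset.univ.filter (fun w => G.Reachable u w) with hS1
    set S2 : Finset (Fin n) := Finset.univ.filter (fun w => ¬ G.Reachable u w) with hS2
    have hmemS1 : ∀ w : Fin n, w ∈ S1 ↔ G.Reachable u w := by
      intro w; simp [hS1]
    have hmemS2 : ∀ w : Fin n, w ∈ S2 ↔ ¬ G.Reachable u w := by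
      intro w; simp [hS2]
    have hdisj : Disjoint S1 S2 := by
      rw [Finset.disjoint_left]
      intro w h1 h2
      exact (hmemS2 w).mp h2 ((hmemS1 w).mp h1)
    have hunion : S1 ∪ S2 = Finset.univ := by
      ext w
      by_cases h : G.Reachable u w <;> simp [hS1, hS2, h]
    -- no cross edges
    have hcross : ∀ p q : Fin n, p ∈ S1 → q ∈ S2 → ¬ G.Adj p q := by
      intro p q hp hq hadj
      exact (hmemS2 q).mp hq (((hmemS1 p).mp hp).trans hadj.reachable)
    obtain ⟨C1, hC1S, hC1cov, hC1card⟩ := alpha0On_exists G S1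
    obtain ⟨C2, hC2S, hC2cov, hC2card⟩ := alpha0On_exists G S2
    have hle1 : alpha0On G Finset.univ ≤ alpha0On G S1 + alpha0On G S2 := by
      have hdisjC : Disjoint C1 C2 := hdisj.mono hC1S hC2S
      have hcov : ∀ i ∈ (Finset.univ : Finset (Fin n)), ∀ j ∈ (Finset.univ : Finset (Fin n)),
          G.Adj i j → i ∈ C1 ∪ C2 ∨ j ∈ C1 ∪ C2 := by
        intro i _ j _ hadj
        by_cases hi : i ∈ S1
        · have hj : j ∈ S1 := by
            by_contra hj
            have : j ∈ S2 := by
              have := Finset.mem_univ j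
              rw [← hunion, Finset.mem_union] at this
              tauto
            exact hcross i j hi this hadj
          rcases hC1cov i hi j hj hadj with h | h
          · exact Or.inl (Finset.mem_union_left _ h)
          · exact Or.inr (Finset.mem_union_left _ h)
        · have hi2 : i ∈ S2 := by
            have := Finset.mem_univ i
            rw [← hunion, Finset.mem_union] at this
            tauto
          have hj : j ∈ S2 := by
            by_contra hj
            have hj1 : j ∈ S1 := by
              have := Finset.mem_univ j
              rw [← hunion, Finset.mem_union] at this
              tauto
            exact hcross j i hj1 hi2 hadj.symm
          rcases hC2cov i hi2 j hj hadj with h | h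
          · exact Or.inl (Finset.mem_union_right _ h)
          · exact Or.inr (Finset.mem_union_right _ h)
      have := alpha0On_le G Finset.univ (C1 ∪ C2) (Finset.subset_univ _) hcov
      rwa [Finset.card_union_of_disjoint hdisjC, hC1card, hC2card] at this
    have hle2 : alpha0On G S1 + alpha0On G S2 ≤ alpha0On G Finset.univ := by
      obtain ⟨C, _, hCcov, hCcard⟩ := alpha0On_exists G Finset.univ
      have h1 : alpha0On G S1 ≤ (C ∩ S1).card := by
        apply alpha0On_le G S1 (C ∩ S1) (Finset.inter_subset_right)
        intro i hi j hj hadj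
        rcases hCcov i (Finset.mem_univ i) j (Finset.mem_univ j) hadj with h | h
        · exact Or.inl (Finset.mem_inter.mpr ⟨h, hi⟩)
        · exact Or.inr (Finset.mem_inter.mpr ⟨h, hj⟩)
      have h2 : alpha0On G S2 ≤ (C ∩ S2).card := by
        apply alpha0On_le G S2 (C ∩ S2) (Finset.inter_subset_right)
        intro i hi j hj hadj
        rcases hCcov i (Finset.mem_univ i) j (Finset.mem_univ j) hadj with h | h
        · exact Or.inl (Finset.mem_inter.mpr ⟨h, hi⟩)
        · exact Or.inr (Finset.mem_inter.mpr ⟨h, hj⟩)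
      have hdisjC : Disjoint (C ∩ S1) (C ∩ S2) :=
        hdisj.mono (Finset.inter_subset_right) (Finset.inter_subset_right)
      have hsub : (C ∩ S1) ∪ (C ∩ S2) ⊆ C :=
        Finset.union_subset Finset.inter_subset_left Finset.inter_subset_left
      have := Finset.card_le_card hsub
      rw [Finset.card_union_of_disjoint hdisjC] at this
      omega
    exact hirr ⟨S1, S2, ⟨u, (hmemS1 u).mpr (SimpleGraph.Reachable.refl u)⟩,
      ⟨v, (hmemS2 v).mpr huv⟩, hdisj, hunion, le_antisymm hle1 hle2⟩
  · intro x
    have hle : alpha0On G (Finset.univ.erase x) ≤ alpha0On G Finset.univ := by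
      obtain ⟨C, _, hCcov, hCcard⟩ := alpha0On_exists G Finset.univ
      have h := alpha0On_le G (Finset.univ.erase x) (C.erase x) ?_ ?_
      · calc alpha0On G (Finset.univ.erase x) ≤ (C.erase x).card := h
          _ ≤ C.card := Finset.card_erase_le
          _ = _ := hCcard
      · intro i hi
        exact Finset.mem_erase.mpr ⟨(Finset.mem_erase.mp hi).1, Finset.mem_univ i⟩
      · intro i hi j hj hadj
        rcases hCcov i (Finset.mem_univ i) j (Finset.mem_univ j) hadj with h | h
        · exact Or.inl (Finset.mem_erase.mpr ⟨(Finset.mem_erase.mp hi).1, h⟩)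
        · exact Or.inr (Finset.mem_erase.mpr ⟨(Finset.mem_erase.mp hj).1, h⟩)
    rcases lt_or_eq_of_le hle with h | h
    · exact h
    · exfalso
      have hx0 : alpha0On G {x} = 0 := by
        have := alpha0On_le G {x} ∅ (Finset.empty_subset _) ?_
        · simpa using this
        · intro i hi j hj hadj
          rw [Finset.mem_singleton] at hi hj
          exact absurd hadj (hi ▸ hj ▸ G.irrefl)
      have hy : ∃ y, y ∈ Finset.univ.erase x := by
        by_cases hax : a = x
        · exact ⟨b, Finset.mem_erase.mpr ⟨fun hbx => hne (hax.trans hbx.symm), Finset.mem_univ b⟩⟩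
        · exact ⟨a, Finset.mem_erase.mpr ⟨hax, Finset.mem_univ a⟩⟩
      refine hirr ⟨{x}, Finset.univ.erase x, Finset.singleton_nonempty x, hy, ?_, ?_, ?_⟩
      · simp [Finset.disjoint_left]
      · rw [← Finset.insert_eq, Finset.insert_erase (Finset.mem_univ x)]
      · rw [hx0, h]
        omega
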